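/- For an index k of depth r ≥ 2 and non-negative integers u, u', the iterated shuffle-with-ones operation satisfies (k_u)_{u'} = C(u+u', u) · k_{u+u'}, where k_u := (k₁, ((k₂,…,k_{r-1}) ш {1}^u), k_r) as a formal linear combination of indices, extended linearly. -/

import Mathlib

/-- The naive shuffle of two tuples: formal sum of all interleavings. -/
noncomputable def shuf : List ℕ → List ℕ → (List ℕ →₀ ℤ)
  | [], l => Finsupp.single l 1
  | k, [] => Finsupp.single k 1
  | a :: k, b :: l =>
      (shuf k (b :: l)).mapDomain (a :: ·) + (shuf (a :: k) l).mapDomain (b :: ·)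
termination_by k l => k.length + l.length

/-- k_u := (k₁, ((k₂,…,k_{r-1}) ш {1}^u), k_r), as a formal sum of indices. -/
noncomputable def kU (k : List ℕ) (u : ℕ) : List ℕ →₀ ℤ :=
  (shuf (k.drop 1).dropLast (List.replicate u 1)).mapDomain
    (fun mid => k.headD 1 :: (mid ++ [k.getLastD 1]))

/-- Linear extension of `kU` to formal ℤ-linear combinations of indices. -/
noncomputable def kUExt (x : List ℕ →₀ ℤ) (u : ℕ) : List ℕ →₀ ℤ :=
  x.sum fun k c => c • kU k u

/-!
Framing by the fixed first and last letters commutes with the linear extension, so the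
theorem reduces to `(m ш {1}^u) ш {1}^{u'} = C(u+u', u) · m ш {1}^{u+u'}` for the middle `m`.
This is proved by induction on `|m| + u + u'`, splitting each shuffle according to its first
letter: the words starting with a letter of `m` come from the induction hypothesis for the tail
of `m`, and those starting with `1` from the two ways that `1` can have come from `{1}^u` or
from `{1}^{u'}`, which is Pascal's rule.
-/

open Finsupp

lemma shuf_nil_left (l : List ℕ) : shuf [] l = single l 1 := by
  cases l <;> simp [shuf]

lemma shuf_nil_right (k : List ℕ) : shuf k [] = single k 1 := by
  cases k <;> simp [shuf]

lemma shuf_cons_cons (a b : ℕ) (k l : List ℕ) :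
    shuf (a :: k) (b :: l) =
      (shuf k (b :: l)).mapDomain (a :: ·) + (shuf (a :: k) l).mapDomain (b :: ·) := by
  rw [shuf]

lemma shuf_cons_replicate_succ (a : ℕ) (m : List ℕ) (u : ℕ) :
    shuf (a :: m) (List.replicate (u + 1) 1) =
      (shuf m (List.replicate (u + 1) 1)).mapDomain (a :: ·) +
        (shuf (a :: m) (List.replicate u 1)).mapDomain (1 :: ·) := by
  rw [List.replicate_succ, shuf_cons_cons]

lemma shuf_nil_replicate_succ (u : ℕ) :
    shuf [] (List.replicate (u + 1) 1) = (shuf [] (List.replicate u 1)).mapDomain (1 :: ·) := by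
  rw [shuf_nil_left, shuf_nil_left, mapDomain_single, List.replicate_succ]

noncomputable def shufOnes (v : ℕ) : (List ℕ →₀ ℤ) →ₗ[ℤ] (List ℕ →₀ ℤ) :=
  linearCombination ℤ fun w => shuf w (List.replicate v 1)

lemma shufOnes_single (w : List ℕ) (v : ℕ) :
    shufOnes v (single w 1) = shuf w (List.replicate v 1) := by
  simp [shufOnes]

lemma shufOnes_zero (x : List ℕ →₀ ℤ) : shufOnes 0 x = x := by
  induction x using Finsupp.induction_linear with
  | zero => simp
  | add x y hx hy => rw [map_add, hx, hy]
  | single w c => simp [shufOnes, shuf_nil_right]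

lemma shufOnes_succ_mapDomain_cons (c v : ℕ) (x : List ℕ →₀ ℤ) :
    shufOnes (v + 1) (x.mapDomain (c :: ·)) =
      (shufOnes (v + 1) x).mapDomain (c :: ·) +
        (shufOnes v (x.mapDomain (c :: ·))).mapDomain (1 :: ·) := by
  induction x using Finsupp.induction_linear with
  | zero => simp
  | add x y hx hy =>
    simp only [mapDomain_add, map_add, hx, hy]
    abel
  | single w r =>
    simp only [shufOnes, mapDomain_single, linearCombination_single, mapDomain_smul,
      List.replicate_succ, shuf_cons_cons, smul_add]

theorem shufOnes_shuf_replicate : ∀ (m : List ℕ) (u u' : ℕ),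
    shufOnes u' (shuf m (List.replicate u 1)) =
      ((u + u').choose u : ℤ) • shuf m (List.replicate (u + u') 1)
  | m, 0, u' => by simp [shuf_nil_right, shufOnes_single]
  | m, u + 1, 0 => by simp [shufOnes_zero]
  | [], u + 1, u' + 1 => by
    rw [shuf_nil_replicate_succ, shufOnes_succ_mapDomain_cons, ← shuf_nil_replicate_succ,
      shufOnes_shuf_replicate [] u, shufOnes_shuf_replicate [] (u + 1),
      show u + 1 + (u' + 1) = u + u' + 1 + 1 by omega, shuf_nil_replicate_succ (u + u' + 1),
      show u + (u' + 1) = u + u' + 1 by omega, show u + 1 + u' = u + u' + 1 by omega,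
      Nat.choose_succ_succ' (u + u' + 1) u, Nat.cast_add]
    simp only [mapDomain_smul]
    module
  | a :: m, u + 1, u' + 1 => by
    have regroup := congrArg (shufOnes u') (shuf_cons_replicate_succ a m u)
    rw [shuf_cons_replicate_succ, map_add, shufOnes_succ_mapDomain_cons,
      shufOnes_succ_mapDomain_cons, add_add_add_comm, ← mapDomain_add, ← map_add, ← regroup,
      shufOnes_shuf_replicate m (u + 1), shufOnes_shuf_replicate (a :: m) u,
      shufOnes_shuf_replicate (a :: m) (u + 1),
      show u + 1 + (u' + 1) = u + u' + 1 + 1 by omega, shuf_cons_replicate_succ a m (u + u' + 1),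
      show u + (u' + 1) = u + u' + 1 by omega, show u + 1 + u' = u + u' + 1 by omega,
      Nat.choose_succ_succ', Nat.cast_add]
    simp only [mapDomain_smul]
    module
termination_by m u u' => m.length + u + u'

lemma kU_cons_append_singleton (a b : ℕ) (w : List ℕ) (u : ℕ) :
    kU (a :: (w ++ [b])) u =
      (shuf w (List.replicate u 1)).mapDomain fun m => a :: (m ++ [b]) := by
  rw [kU, ← List.cons_append, List.getLastD_concat]
  simp

lemma kUExt_mapDomain_frame (a b : ℕ) (x : List ℕ →₀ ℤ) (u : ℕ) :
    kUExt (x.mapDomain fun m => a :: (m ++ [b])) u =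
      (shufOnes u x).mapDomain fun m => a :: (m ++ [b]) := by
  rw [kUExt, ← linearCombination_apply, linearCombination_mapDomain, shufOnes,
    ← lmapDomain_apply ℤ ℤ, apply_linearCombination]
  congr 2
  funext w
  exact kU_cons_append_singleton a b w u

theorem kU_iterate_general (k : List ℕ) (u u' : ℕ) :
    kUExt (kU k u) u' = ((u + u').choose u : ℤ) • kU k (u + u') := by
  rw [kU, kUExt_mapDomain_frame, shufOnes_shuf_replicate, mapDomain_smul, kU]

/-- Iterated shuffle-with-ones: (k_u)_{u'} = C(u+u', u) · k_{u+u'}. -/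
theorem kU_iterate (k : List ℕ) (hk : 2 ≤ k.length) (u u' : ℕ) :
    kUExt (kU k u) u' = ((u + u').choose u : ℤ) • kU k (u + u') :=
  kU_iterate_general k u u'
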